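/- Let (X,d) be a compact metric space and let ξ = ξ(x,ω) be a jointly measurable random field on X whose sample paths are almost surely (uniformly) continuous. Then ξ is factorably continuous: there exist a scaling function g on [0, diam(X)] and a non-negative almost surely finite random variable τ such that, almost surely, Δ(ξ(·,ω),δ) ≤ τ(ω) · g(δ) for every δ ∈ [0, diam(X)]. (Conversely, factorable continuity trivially implies almost sure continuity, so the two notions are equivalent.) -/

import Mathlib

/-!
Fix a countable dense set `s ⊆ X` and let `Δₛ(ρ)` be the supremum of the increments of a sample
path over pairs of points of `s` at distance `< ρ`. It is measurable in `ω`, it dominates the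
modulus of continuity `Δ(δ)` of a continuous path for every `ρ > δ`, and by uniform continuity it
tends to `0` as `ρ → 0` almost surely, hence in probability. Choose scales `δₙ → 0` with
`P(Δₛ(δₙ) > 2⁻ⁿ) ≤ 2⁻ⁿ`; by Borel–Cantelli `τ = supₙ 2ⁿ Δₛ(δₙ)` is almost surely finite. A
continuous nondecreasing `g` with `g ≥ 2⁻ⁿ` on `[δₙ, ∞)` then gives, for `δₙ₊₁ ≤ δ < δₙ`,
`Δ(δ) ≤ Δₛ(δₙ) ≤ τ 2⁻ⁿ ≤ 2 τ g(δ)`.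
-/

open MeasureTheory Filter Set

/-- The modulus of continuity `Δ(f, δ)` of a function `f` on a metric space. -/
noncomputable def modCont {X : Type*} [MetricSpace X] (f : X → ℝ) (δ : ℝ) : ℝ :=
  sSup {r : ℝ | ∃ x y : X, dist x y ≤ δ ∧ r = |f x - f y|}

/-- A scaling function on `[0, D]`: continuous, non-negative, nondecreasing, vanishing at `0`. -/
def IsScalingFunction (g : ℝ → ℝ) (D : ℝ) : Prop :=
  ContinuousOn g (Set.Icc 0 D) ∧ (∀ δ ∈ Set.Icc 0 D, 0 ≤ g δ) ∧
    MonotoneOn g (Set.Icc 0 D) ∧ g 0 = 0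

open scoped ENNReal Topology

section DenseModulus

variable {X Y : Type*} [PseudoMetricSpace X] [PseudoMetricSpace Y]

noncomputable def denseModulus (s : Set X) (f : X → Y) (ρ : ℝ) : ℝ≥0∞ :=
  ⨆ p ∈ {p : X × X | dist p.1 p.2 < ρ} ∩ s ×ˢ s, edist (f p.1) (f p.2)

variable {s : Set X} {f : X → Y}

/-- The pairs from `s` are dense in the open set `{dist < ρ}`, where the bound is a closed
condition. -/
theorem edist_le_denseModulus (hs : Dense s) (hf : Continuous f) {ρ : ℝ} {x y : X}
    (hxy : dist x y < ρ) : edist (f x) (f y) ≤ denseModulus s f ρ := by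
  have hU : IsOpen {p : X × X | dist p.1 p.2 < ρ} :=
    isOpen_lt (continuous_fst.dist continuous_snd) continuous_const
  have hC : IsClosed {p : X × X | edist (f p.1) (f p.2) ≤ denseModulus s f ρ} :=
    isClosed_le ((hf.comp continuous_fst).edist (hf.comp continuous_snd)) continuous_const
  have hsub : {p : X × X | dist p.1 p.2 < ρ} ∩ s ×ˢ s ⊆
      {p : X × X | edist (f p.1) (f p.2) ≤ denseModulus s f ρ} := fun _ hp =>
    le_biSup (fun p : X × X => edist (f p.1) (f p.2)) hp
  exact hC.closure_subset_iff.2 hsub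
    ((hs.prod hs).open_subset_closure_inter hU (show (x, y) ∈ _ from hxy))

theorem denseModulus_ne_top [CompactSpace X] (hf : Continuous f) (ρ : ℝ) :
    denseModulus s f ρ ≠ ∞ :=
  ne_top_of_le_ne_top (isCompact_range hf).isBounded.ediam_ne_top <|
    iSup₂_le fun _ _ => Metric.edist_le_ediam_of_mem (mem_range_self _) (mem_range_self _)

theorem tendsto_denseModulus_nhdsGT_zero (hf : UniformContinuous f) :
    Tendsto (denseModulus s f) (𝓝[>] 0) (𝓝 0) := by
  refine ENNReal.tendsto_nhds_zero.2 fun ε hε => ?_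
  obtain ⟨η, hη, hfη⟩ := EMetric.uniformContinuous_iff.1 hf ε hε
  have hsmall : ∀ᶠ ρ in 𝓝[>] (0 : ℝ), ENNReal.ofReal ρ < η :=
    nhdsWithin_le_nhds <| (ENNReal.continuous_ofReal.tendsto' 0 0 ENNReal.ofReal_zero).eventually
      (gt_mem_nhds hη)
  filter_upwards [hsmall] with ρ hρ
  exact iSup₂_le fun p hp => (hfη ((edist_lt_ofReal.2 hp.1).trans hρ)).le

theorem measurable_denseModulus {Ω : Type*} [MeasurableSpace Ω] [MeasurableSpace Y]
    [OpensMeasurableSpace Y] [SecondCountableTopology Y] (hs : s.Countable) {ξ : X → Ω → Y}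
    (hξ : ∀ x, Measurable (ξ x)) (ρ : ℝ) :
    Measurable fun ω => denseModulus s (fun x => ξ x ω) ρ :=
  Measurable.biSup _ ((hs.prod hs).mono inter_subset_right) fun p _ =>
    (hξ p.1).edist (hξ p.2)

end DenseModulus

theorem exists_lt_and_succ_le {α : Type*} [LinearOrder α] {u : ℕ → α} {x : α} (h₀ : x < u 0)
    (h : ∃ n, u n ≤ x) : ∃ n, x < u n ∧ u (n + 1) ≤ x := by
  by_contra! hcon
  obtain ⟨n, hn⟩ := h
  exact (hn.trans_lt (Nat.rec (motive := fun n => x < u n) h₀ hcon n)).false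

section ModulusOfContinuity

variable {X : Type*} [MetricSpace X]

theorem modCont_le {f : X → ℝ} {δ C : ℝ} (hC : 0 ≤ C)
    (h : ∀ x y, dist x y ≤ δ → |f x - f y| ≤ C) : modCont f δ ≤ C :=
  Real.sSup_le (fun _ ⟨x, y, hxy, hr⟩ => hr ▸ h x y hxy) hC

theorem modCont_zero_le (f : X → ℝ) : modCont f 0 ≤ 0 :=
  modCont_le le_rfl fun x y hxy => by rw [dist_le_zero.1 hxy, sub_self, abs_zero]

theorem modCont_le_of_scales {f : X → ℝ} {δ : ℕ → ℝ} {g : ℝ → ℝ} {T : ℝ≥0∞} (hT : T ≠ ∞)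
    (hf : ∀ n x y, dist x y < δ n → 2 ^ n * edist (f x) (f y) ≤ T)
    (hg : ∀ n x, δ n ≤ x → (2⁻¹ : ℝ) ^ n ≤ g x)
    {x : ℝ} (hx₀ : x < δ 0) (hx : ∃ n, δ n ≤ x) : modCont f x ≤ 2 * T.toReal * g x := by
  obtain ⟨n, hxn, hnx⟩ := exists_lt_and_succ_le hx₀ hx
  have hpow : (0 : ℝ) < 2 ^ n := by positivity
  calc modCont f x ≤ T.toReal * 2⁻¹ ^ n := by
        refine modCont_le (by positivity) fun a b hab => ?_
        have hT' := ENNReal.toReal_mono hT (hf n a b (hab.trans_lt hxn))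
        rw [ENNReal.toReal_mul, edist_dist, ENNReal.toReal_ofReal dist_nonneg,
          ENNReal.toReal_pow, ENNReal.toReal_ofNat, Real.dist_eq] at hT'
        rw [inv_pow, ← div_eq_mul_inv, le_div_iff₀ hpow]
        linarith
    _ = 2 * T.toReal * 2⁻¹ ^ (n + 1) := by ring
    _ ≤ 2 * T.toReal * g x := by gcongr; exact hg _ _ hnx

end ModulusOfContinuity

theorem exists_isScalingFunction_ge {δ : ℕ → ℝ} (hδ : ∀ n, 0 < δ n) (D : ℝ) :
    ∃ g : ℝ → ℝ, IsScalingFunction g D ∧ ∀ n x, δ n ≤ x → (2⁻¹ : ℝ) ^ n ≤ g x := by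
  set term : ℕ → ℝ → ℝ := fun n x => 2⁻¹ ^ n * min 1 (max x 0 / δ n)
  have hterm_nonneg : ∀ n x, 0 ≤ term n x := fun n x =>
    mul_nonneg (by positivity) (le_min zero_le_one (div_nonneg (le_max_right _ _) (hδ n).le))
  have hterm_le : ∀ n x, term n x ≤ 2⁻¹ ^ n := fun n x =>
    mul_le_of_le_one_right (by positivity) (min_le_left _ _)
  have hgeom : Summable fun n : ℕ => (2⁻¹ : ℝ) ^ n :=
    summable_geometric_of_lt_one (by norm_num) (by norm_num)
  have hsum : ∀ x, Summable (term · x) := fun x =>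
    hgeom.of_nonneg_of_le (hterm_nonneg · x) (hterm_le · x)
  have hmono : Monotone fun x => ∑' n, term n x := fun x y hxy =>
    (hsum x).tsum_mono (hsum y) fun n => by
      dsimp only [term]
      gcongr
      exact (hδ n).le
  have hcont : Continuous fun x => ∑' n, term n x :=
    continuous_tsum (fun n => by fun_prop) hgeom fun n x => by
      rw [Real.norm_of_nonneg (hterm_nonneg n x)]
      exact hterm_le n x
  refine ⟨fun x => ∑' n, term n x,
    ⟨hcont.continuousOn, fun x _ => tsum_nonneg (hterm_nonneg · x), hmono.monotoneOn _,
      by simp [term]⟩, fun n x hx => ?_⟩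
  calc (2⁻¹ : ℝ) ^ n = term n x := by
        simp only [term]
        rw [max_eq_left ((hδ n).le.trans hx), min_eq_left ((one_le_div (hδ n)).2 hx), mul_one]
    _ ≤ ∑' n, term n x := (hsum x).le_tsum n fun m _ => hterm_nonneg m x

section Probability

variable {Ω : Type*} [MeasurableSpace Ω] {P : Measure Ω}

theorem tendsto_measure_lt_of_ae_tendsto_zero [IsFiniteMeasure P] {ι : Type*} {l : Filter ι}
    [l.IsCountablyGenerated] {F : ι → Ω → ℝ≥0∞} (hF : ∀ i, Measurable (F i))
    (hlim : ∀ᵐ ω ∂P, Tendsto (F · ω) l (𝓝 0)) {ε : ℝ≥0∞} (hε : 0 < ε) :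
    Tendsto (fun i => P {ω | ε < F i ω}) l (𝓝 0) := by
  have hind : ∀ i, P {ω | ε < F i ω} = ∫⁻ ω, {ω | ε < F i ω}.indicator 1 ω ∂P := fun i =>
    (lintegral_indicator_one (measurableSet_lt measurable_const (hF i))).symm
  simp_rw [hind]
  simpa using tendsto_lintegral_filter_of_dominated_convergence (μ := P) (f := 0) 1
    (.of_forall fun i => measurable_one.indicator (measurableSet_lt measurable_const (hF i)))
    (.of_forall fun i => .of_forall fun ω => indicator_le_self' (fun _ _ => zero_le_one) ω)
    (by simp) (hlim.mono fun ω hω => tendsto_const_nhds.congr' <|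
      (hω.eventually (gt_mem_nhds hε)).mono fun i hi => by simp [hi.not_gt])

theorem exists_scales_measure_lt_le [IsProbabilityMeasure P] {F : ℝ → Ω → ℝ≥0∞}
    (hF : ∀ ρ, Measurable (F ρ)) (hlim : ∀ᵐ ω ∂P, Tendsto (F · ω) (𝓝[>] 0) (𝓝 0))
    {r : ℝ} (hr : 0 < r) :
    ∃ δ : ℕ → ℝ, δ 0 = r ∧ (∀ n, 0 < δ n) ∧ Tendsto δ atTop (𝓝 0) ∧
      ∀ n, P {ω | 2⁻¹ ^ n < F (δ n) ω} ≤ 2⁻¹ ^ n := by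
  have hpos : ∀ n : ℕ, (0 : ℝ≥0∞) < 2⁻¹ ^ n := fun n => ENNReal.pow_pos (by norm_num) n
  have hscale : ∀ n : ℕ, ∃ ρ ∈ Ioo (0 : ℝ) (1 / (n + 1)), P {ω | 2⁻¹ ^ n < F ρ ω} < 2⁻¹ ^ n :=
    fun n => ((show ∀ᶠ ρ in 𝓝[>] (0 : ℝ), ρ ∈ Ioo 0 (1 / ((n : ℝ) + 1)) from
      Ioo_mem_nhdsGT (by positivity)).and
      ((tendsto_measure_lt_of_ae_tendsto_zero hF hlim (hpos n)).eventually
        (gt_mem_nhds (hpos n)))).exists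
  choose ρ hρ hρP using hscale
  have hρlim : Tendsto ρ atTop (𝓝 0) :=
    tendsto_of_tendsto_of_tendsto_of_le_of_le tendsto_const_nhds
      tendsto_one_div_add_atTop_nhds_zero_nat (fun n => (hρ n).1.le) fun n => (hρ n).2.le
  refine ⟨fun n => if n = 0 then r else ρ n, rfl, fun n => ?_, ?_, fun n => ?_⟩
  · dsimp only
    split_ifs
    exacts [hr, (hρ n).1]
  · exact hρlim.congr' ((eventually_ne_atTop 0).mono fun n hn => (if_neg hn).symm)
  · dsimp only
    split_ifs with hn
    · subst hn
      simpa using prob_le_one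
    · exact (hρP n).le

theorem ENNReal.iSup_ne_top_of_eventually_le_one {u : ℕ → ℝ≥0∞} (hu : ∀ n, u n ≠ ∞)
    (h : ∀ᶠ n in atTop, u n ≤ 1) : ⨆ n, u n ≠ ∞ := by
  obtain ⟨N, hN⟩ := eventually_atTop.1 h
  refine ne_top_of_le_ne_top (b := ∑ k ∈ Finset.range N, u k + 1)
    (ENNReal.add_ne_top.2 ⟨ENNReal.sum_ne_top.2 fun k _ => hu k, ENNReal.one_ne_top⟩)
    (iSup_le fun n => ?_)
  rcases lt_or_ge n N with hn | hn
  · exact le_add_right (Finset.single_le_sum (fun _ _ => zero_le) (Finset.mem_range.2 hn))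
  · exact le_add_left (hN n hn)

/-- Borel–Cantelli: almost surely `u n ≤ 2⁻ⁿ` for all large `n`. -/
theorem ae_iSup_two_pow_mul_ne_top {u : ℕ → Ω → ℝ≥0∞} (hu : ∀ᵐ ω ∂P, ∀ n, u n ω ≠ ∞)
    (hP : ∀ n, P {ω | 2⁻¹ ^ n < u n ω} ≤ 2⁻¹ ^ n) : ∀ᵐ ω ∂P, ⨆ n, 2 ^ n * u n ω ≠ ∞ := by
  have hsum : ∑' n, P {ω | 2⁻¹ ^ n < u n ω} ≠ ∞ :=
    ne_top_of_le_ne_top (by simp [ENNReal.tsum_geometric, ENNReal.one_sub_inv_two])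
      (ENNReal.tsum_le_tsum hP)
  filter_upwards [hu, ae_eventually_notMem hsum] with ω hfin hev
  refine ENNReal.iSup_ne_top_of_eventually_le_one
    (fun n => ENNReal.mul_ne_top (ENNReal.pow_ne_top ENNReal.ofNat_ne_top) (hfin n))
    (hev.mono fun n hn => ?_)
  calc 2 ^ n * u n ω ≤ 2 ^ n * 2⁻¹ ^ n := by gcongr; exact not_lt.1 hn
    _ = 1 := by rw [← mul_pow, ENNReal.mul_inv_cancel two_ne_zero ENNReal.ofNat_ne_top, one_pow]

end Probability

theorem factorably_continuous_of_ae_continuous_general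
    {X Ω : Type*} [MetricSpace X] [CompactSpace X]
    [MeasurableSpace X] [MeasurableSpace Ω]
    (P : Measure Ω) [IsProbabilityMeasure P]
    (ξ : X → Ω → ℝ)
    (hmeas : Measurable fun p : X × Ω => ξ p.1 p.2)
    (hcont : ∀ᵐ ω ∂P, Continuous fun x => ξ x ω) :
    ∃ (g : ℝ → ℝ) (τ : Ω → ℝ),
      IsScalingFunction g (Metric.diam (Set.univ : Set X)) ∧
      Measurable τ ∧ (∀ ω, 0 ≤ τ ω) ∧
      ∀ᵐ ω ∂P, ∀ δ ∈ Set.Icc (0 : ℝ) (Metric.diam (Set.univ : Set X)),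
        modCont (fun x => ξ x ω) δ ≤ τ ω * g δ := by
  set D := Metric.diam (Set.univ : Set X)
  obtain ⟨s, hs_count, hs_dense⟩ := TopologicalSpace.exists_countable_dense X
  set F : ℝ → Ω → ℝ≥0∞ := fun ρ ω => denseModulus s (fun x => ξ x ω) ρ
  have hF : ∀ ρ, Measurable (F ρ) :=
    measurable_denseModulus hs_count fun x => hmeas.comp measurable_prodMk_left
  obtain ⟨δ, hδ₀, hδ_pos, hδ_lim, hδ_P⟩ := exists_scales_measure_lt_le hF
    (hcont.mono fun ω hω => tendsto_denseModulus_nhdsGT_zero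
      (CompactSpace.uniformContinuous_of_continuous hω))
    (show 0 < D + 1 by linarith [Metric.diam_nonneg (s := (univ : Set X))])
  obtain ⟨g, hg, hg_ge⟩ := exists_isScalingFunction_ge hδ_pos D
  set T : Ω → ℝ≥0∞ := fun ω => ⨆ n, 2 ^ n * F (δ n) ω
  have hT : ∀ᵐ ω ∂P, T ω ≠ ∞ := ae_iSup_two_pow_mul_ne_top
    (hcont.mono fun ω hω n => denseModulus_ne_top hω _) hδ_P
  refine ⟨g, fun ω => 2 * (T ω).toReal, hg,
    (Measurable.iSup fun n => (hF _).const_mul _).ennreal_toReal.const_mul _,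
    fun ω => by positivity, ?_⟩
  filter_upwards [hcont, hT] with ω hω hTω
  rintro x ⟨hx₀, hxD⟩
  rcases hx₀.eq_or_lt with rfl | hx₀
  · simpa [hg.2.2.2] using modCont_zero_le _
  refine modCont_le_of_scales hTω (fun n a b hab => ?_) hg_ge (by linarith)
    ((hδ_lim.eventually_lt_const hx₀).exists.imp fun _ => le_of_lt)
  calc 2 ^ n * edist (ξ a ω) (ξ b ω) ≤ 2 ^ n * F (δ n) ω := by
        gcongr; exact edist_le_denseModulus hs_dense hω hab
    _ ≤ T ω := le_iSup (fun n => 2 ^ n * F (δ n) ω) n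

/-- a random field on a compact metric space with almost surely continuous
sample paths is factorably continuous: `Δ(ξ(·,ω), δ) ≤ τ(ω) · g(δ)` with a scaling
function `g` and a non-negative finite random variable `τ`. -/
theorem factorably_continuous_of_ae_continuous
    {X Ω : Type*} [MetricSpace X] [CompactSpace X]
    [MeasurableSpace X] [BorelSpace X] [MeasurableSpace Ω]
    (P : Measure Ω) [IsProbabilityMeasure P]
    (ξ : X → Ω → ℝ)
    (hmeas : Measurable fun p : X × Ω => ξ p.1 p.2)
    (hcont : ∀ᵐ ω ∂P, Continuous fun x => ξ x ω) :
    ∃ (g : ℝ → ℝ) (τ : Ω → ℝ),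
      IsScalingFunction g (Metric.diam (Set.univ : Set X)) ∧
      Measurable τ ∧ (∀ ω, 0 ≤ τ ω) ∧
      ∀ᵐ ω ∂P, ∀ δ ∈ Set.Icc (0 : ℝ) (Metric.diam (Set.univ : Set X)),
        modCont (fun x => ξ x ω) δ ≤ τ ω * g δ :=
  factorably_continuous_of_ae_continuous_general P ξ hmeas hcont
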